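/- arXiv:2603.00957 — 4 statements merged into one kernel-verified Lean document; each statement's English description precedes it below -/
import Mathlib

section
/- Let I ⊆ ℝ be an open interval and let ρ̃ : ℝ³ × I → ℝ, u : ℝ³ × I → ℝ³ and 𝔽 : ℝ³ × I → M₃(ℝ) be smooth functions satisfying pointwise ∂_t ρ̃ + u·∇ρ̃ = 0 and ∂_t 𝔽 + u·∇𝔽 = (∇u)𝔽. Then the matrix-valued function G := ρ̃ 𝔽 𝔽ᵀ − I satisfies pointwise ∂_t G + u·∇G − (∇u)G − G(∇u)ᵀ = ∇u + (∇u)ᵀ. -/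
open MeasureTheory FourierTransform

noncomputable section

/-- Points of physical space `ℝ³`. -/
abbrev E3 : Type := EuclideanSpace ℝ (Fin 3)

/-- The partial derivative `∂f/∂x_k` of a scalar field on `ℝ³`. -/
def pd (k : Fin 3) (f : E3 → ℝ) : E3 → ℝ :=
  fun x => fderiv ℝ f x (EuclideanSpace.single k 1)

/-- The iterated partial derivative `∂^α f = ∂₀^a ∂₁^b ∂₂^c f`. -/
def pdIter (a b c : ℕ) (f : E3 → ℝ) : E3 → ℝ :=
  (pd 0)^[a] ((pd 1)^[b] ((pd 2)^[c] f))

/-- Multi-indices `α` on `ℝ³` with `|α| ≤ m`. -/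
def idxLe (m : ℕ) : Finset (ℕ × ℕ × ℕ) :=
  (Finset.range (m + 1) ×ˢ Finset.range (m + 1) ×ˢ Finset.range (m + 1)).filter
    (fun α => α.1 + α.2.1 + α.2.2 ≤ m)

/-- Multi-indices `α` on `ℝ³` with `1 ≤ |α| ≤ m + 1`. -/
def idxGrad (m : ℕ) : Finset (ℕ × ℕ × ℕ) :=
  (Finset.range (m + 2) ×ˢ Finset.range (m + 2) ×ˢ Finset.range (m + 2)).filter
    (fun α => 1 ≤ α.1 + α.2.1 + α.2.2 ∧ α.1 + α.2.1 + α.2.2 ≤ m + 1)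

/-- The squared `Hᵐ` norm of a scalar field: `Σ_{|α|≤m} ‖∂^α f‖²_{L²}`. -/
def sobSq (m : ℕ) (f : E3 → ℝ) : ℝ :=
  ∑ α ∈ idxLe m, ∫ x : E3, (pdIter α.1 α.2.1 α.2.2 f x) ^ 2

/-- The squared `Hᵐ` norm of the gradient of a scalar field:
`‖∇f‖²_{Hᵐ} = Σ_{1≤|α|≤m+1} ‖∂^α f‖²_{L²}`. -/
def gradSobSq (m : ℕ) (f : E3 → ℝ) : ℝ :=
  ∑ α ∈ idxGrad m, ∫ x : E3, (pdIter α.1 α.2.1 α.2.2 f x) ^ 2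

/-- The squared `Hᵐ` norm of a vector field (summing over components). -/
def sobSqVec (m : ℕ) (u : E3 → Fin 3 → ℝ) : ℝ :=
  ∑ i, sobSq m (fun x => u x i)

/-- The squared `Hᵐ` norm of the gradient of a vector field (summing over components). -/
def gradSobSqVec (m : ℕ) (u : E3 → Fin 3 → ℝ) : ℝ :=
  ∑ i, gradSobSq m (fun x => u x i)

/-- The squared `Hᵐ` norm of a matrix field (summing over components). -/
def sobSqMat (m : ℕ) (M : E3 → Fin 3 → Fin 3 → ℝ) : ℝ :=
  ∑ i, ∑ j, sobSq m (fun x => M x i j)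

/-- `f : ℝ³ → ℝ` is a Schwartz function. -/
def IsSchwartz (f : E3 → ℝ) : Prop :=
  ContDiff ℝ (⊤ : ℕ∞) f ∧ ∀ k n : ℕ, ∃ C : ℝ, ∀ x, ‖x‖ ^ k * ‖iteratedFDeriv ℝ n f x‖ ≤ C

/-- The operator `Λ^s f := 𝓕⁻¹(|ξ|^s 𝓕 f)` on scalar fields. -/
def lam (s : ℝ) (f : E3 → ℝ) : E3 → ℝ := fun x =>
  (𝓕⁻ (fun ξ : E3 => (‖ξ‖ ^ s : ℝ) • 𝓕 (fun y => (f y : ℂ)) ξ) x).re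

/-- `‖Λh‖²_{Hᵐ} = Σ_{k=0}^{m} ‖Λ^{k+1} h‖²_{L²}` for a vector field `h`
(summing over components). -/
def lamSobSqVec (m : ℕ) (u : E3 → Fin 3 → ℝ) : ℝ :=
  ∑ k ∈ Finset.range (m + 1), ∑ i, ∫ x : E3, (lam ((k : ℝ) + 1) (fun y => u y i) x) ^ 2

/-!
The material derivative `D = ∂_t + u·∇` obeys the Leibniz rule. Since `Dρ̃ = 0` and
`D𝔽 = (∇u)𝔽`, we get `DG = D(ρ̃𝔽𝔽ᵀ) = ρ̃((∇u)𝔽𝔽ᵀ + 𝔽𝔽ᵀ(∇u)ᵀ)`, and substituting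
`ρ̃𝔽𝔽ᵀ = G + I` gives `DG = (∇u)G + G(∇u)ᵀ + ∇u + (∇u)ᵀ`.
-/

open scoped Matrix

theorem pd_mul {f g : E3 → ℝ} {x : E3} (hf : DifferentiableAt ℝ f x)
    (hg : DifferentiableAt ℝ g x) (k : Fin 3) :
    pd k (fun y => f y * g y) x = pd k f x * g x + f x * pd k g x := by
  simp only [pd, fderiv_fun_mul hf hg, add_apply, smul_apply, smul_eq_mul]
  ring

theorem pd_sum {ι : Type*} {s : Finset ι} {f : ι → E3 → ℝ} {x : E3}
    (hf : ∀ i ∈ s, DifferentiableAt ℝ (f i) x) (k : Fin 3) :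
    pd k (fun y => ∑ i ∈ s, f i y) x = ∑ i ∈ s, pd k (f i) x := by
  simp [pd, fderiv_fun_sum hf]

theorem pd_sub_const (f : E3 → ℝ) (c : ℝ) (k : Fin 3) :
    pd k (fun y => f y - c) = pd k f := by
  ext x
  simp [pd, fderiv_sub_const]

def materialDeriv (u : ℝ → E3 → Fin 3 → ℝ) (f : ℝ → E3 → ℝ) (t : ℝ) (x : E3) : ℝ :=
  deriv (fun s => f s x) t + ∑ k, u t x k * pd k (f t) x

section MaterialDeriv

variable {u : ℝ → E3 → Fin 3 → ℝ} {t : ℝ} {x : E3}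

def DifferentiableAtSpaceTime (f : ℝ → E3 → ℝ) (t : ℝ) (x : E3) : Prop :=
  DifferentiableAt ℝ (fun q : E3 × ℝ => f q.2 q.1) (x, t)

theorem ContDiffOn.differentiableAtSpaceTime {f : ℝ → E3 → ℝ} {n : WithTop ℕ∞}
    {s : Set (E3 × ℝ)} (hf : ContDiffOn ℝ n (fun q : E3 × ℝ => f q.2 q.1) s) (hn : n ≠ 0)
    (hs : IsOpen s) (hxt : (x, t) ∈ s) : DifferentiableAtSpaceTime f t x :=
  (hf.differentiableOn hn).differentiableAt (hs.mem_nhds hxt)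

theorem DifferentiableAtSpaceTime.differentiableAt_time {f : ℝ → E3 → ℝ}
    (hf : DifferentiableAtSpaceTime f t x) : DifferentiableAt ℝ (fun s => f s x) t :=
  hf.comp (f := fun s => (x, s)) t (by fun_prop)

theorem DifferentiableAtSpaceTime.differentiableAt_space {f : ℝ → E3 → ℝ}
    (hf : DifferentiableAtSpaceTime f t x) : DifferentiableAt ℝ (f t) x :=
  hf.comp (f := fun y => (y, t)) x (by fun_prop)

theorem DifferentiableAtSpaceTime.mul {f g : ℝ → E3 → ℝ} (hf : DifferentiableAtSpaceTime f t x)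
    (hg : DifferentiableAtSpaceTime g t x) :
    DifferentiableAtSpaceTime (fun s y => f s y * g s y) t x :=
  DifferentiableAt.mul hf hg

theorem materialDeriv_mul {f g : ℝ → E3 → ℝ} (hf : DifferentiableAtSpaceTime f t x)
    (hg : DifferentiableAtSpaceTime g t x) :
    materialDeriv u (fun s y => f s y * g s y) t x
      = materialDeriv u f t x * g t x + f t x * materialDeriv u g t x := by
  simp only [materialDeriv, deriv_fun_mul hf.differentiableAt_time hg.differentiableAt_time,
    pd_mul hf.differentiableAt_space hg.differentiableAt_space]
  have hsum : ∑ k, u t x k * (pd k (f t) x * g t x + f t x * pd k (g t) x)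
      = (∑ k, u t x k * pd k (f t) x) * g t x + f t x * ∑ k, u t x k * pd k (g t) x := by
    rw [Finset.sum_mul, Finset.mul_sum, ← Finset.sum_add_distrib]
    exact Finset.sum_congr rfl fun k _ => by ring
  rw [hsum]
  ring

theorem DifferentiableAtSpaceTime.sum {ι : Type*} {s : Finset ι} {f : ι → ℝ → E3 → ℝ}
    (hf : ∀ i ∈ s, DifferentiableAtSpaceTime (f i) t x) :
    DifferentiableAtSpaceTime (fun τ y => ∑ i ∈ s, f i τ y) t x :=
  DifferentiableAt.fun_sum hf

theorem materialDeriv_sum {ι : Type*} {s : Finset ι} {f : ι → ℝ → E3 → ℝ}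
    (hf : ∀ i ∈ s, DifferentiableAtSpaceTime (f i) t x) :
    materialDeriv u (fun τ y => ∑ i ∈ s, f i τ y) t x = ∑ i ∈ s, materialDeriv u (f i) t x := by
  simp only [materialDeriv, Finset.sum_add_distrib, Finset.mul_sum,
    deriv_fun_sum fun i hi => (hf i hi).differentiableAt_time,
    pd_sum fun i hi => (hf i hi).differentiableAt_space]
  rw [Finset.sum_comm]

theorem materialDeriv_sub_const (f : ℝ → E3 → ℝ) (c : ℝ) :
    materialDeriv u (fun τ y => f τ y - c) t x = materialDeriv u f t x := by
  simp [materialDeriv, pd_sub_const]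

theorem materialDeriv_mul_sum_mul {ρ : ℝ → E3 → ℝ} {F : ℝ → E3 → Fin 3 → Fin 3 → ℝ}
    {DF : Matrix (Fin 3) (Fin 3) ℝ} (hρ : DifferentiableAtSpaceTime ρ t x)
    (hF : ∀ p q, DifferentiableAtSpaceTime (fun s y => F s y p q) t x)
    (hDF : ∀ p q, materialDeriv u (fun s y => F s y p q) t x = DF p q) (i j : Fin 3) :
    materialDeriv u (fun s y => ρ s y * ∑ k, F s y i k * F s y j k) t x
      = (materialDeriv u ρ t x • (Matrix.of (F t x) * (Matrix.of (F t x))ᵀ)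
          + ρ t x • (DF * (Matrix.of (F t x))ᵀ + Matrix.of (F t x) * DFᵀ)) i j := by
  have hFF : ∀ k, DifferentiableAtSpaceTime (fun s y => F s y i k * F s y j k) t x :=
    fun k => (hF i k).mul (hF j k)
  rw [materialDeriv_mul hρ (DifferentiableAtSpaceTime.sum fun k _ => hFF k),
    materialDeriv_sum fun k _ => hFF k]
  simp only [fun k => materialDeriv_mul (u := u) (hF i k) (hF j k), hDF]
  simp [Matrix.mul_apply, Finset.sum_add_distrib, mul_add]

end MaterialDeriv

theorem Matrix.smul_add_mul_transpose_eq_of_eq_smul_mul_transpose_sub_one {n R : Type*}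
    [Fintype n] [DecidableEq n] [CommRing R] {ρ : R} {L F G : Matrix n n R}
    (hG : G = ρ • (F * Fᵀ) - 1) :
    ρ • (L * F * Fᵀ + F * (L * F)ᵀ) = L * G + G * Lᵀ + L + Lᵀ := by
  subst hG
  simp only [transpose_mul, Matrix.mul_sub, Matrix.sub_mul, Matrix.mul_smul, Matrix.smul_mul,
    Matrix.mul_one, Matrix.one_mul, Matrix.mul_assoc, smul_add]
  abel

theorem stmt5_general (a b : ℝ)
    (ρ : ℝ → E3 → ℝ) (u : ℝ → E3 → Fin 3 → ℝ) (F : ℝ → E3 → Fin 3 → Fin 3 → ℝ)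
    (G : ℝ → E3 → Fin 3 → Fin 3 → ℝ)
    (hρ_smooth : ContDiffOn ℝ (⊤ : ℕ∞) (fun q : E3 × ℝ => ρ q.2 q.1)
      (Set.univ ×ˢ Set.Ioo a b))
    (hF_smooth : ∀ i j, ContDiffOn ℝ (⊤ : ℕ∞) (fun q : E3 × ℝ => F q.2 q.1 i j)
      (Set.univ ×ˢ Set.Ioo a b))
    (htransport : ∀ x : E3, ∀ t ∈ Set.Ioo a b,
      deriv (fun s => ρ s x) t + ∑ k, u t x k * pd k (ρ t) x = 0)
    (hdeform : ∀ x : E3, ∀ t ∈ Set.Ioo a b, ∀ i j,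
      deriv (fun s => F s x i j) t + ∑ k, u t x k * pd k (fun y => F t y i j) x
        = ∑ k, pd k (fun y => u t y i) x * F t x k j)
    (hG : ∀ t x i j,
      G t x i j = ρ t x * (∑ k, F t x i k * F t x j k) - (if i = j then (1:ℝ) else 0)) :
    ∀ x : E3, ∀ t ∈ Set.Ioo a b, ∀ i j,
      deriv (fun s => G s x i j) t + ∑ k, u t x k * pd k (fun y => G t y i j) x
        - ∑ k, pd k (fun y => u t y i) x * G t x k j
        - ∑ k, G t x i k * pd k (fun y => u t y j) x
      = pd j (fun y => u t y i) x + pd i (fun y => u t y j) x := by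
  intro x t ht i j
  have hdiff : ∀ f : ℝ → E3 → ℝ, ContDiffOn ℝ (⊤ : ℕ∞) (fun q : E3 × ℝ => f q.2 q.1)
      (Set.univ ×ˢ Set.Ioo a b) → DifferentiableAtSpaceTime f t x := fun f hf =>
    hf.differentiableAtSpaceTime (by simp) (isOpen_univ.prod isOpen_Ioo) ⟨trivial, ht⟩
  set L : Matrix (Fin 3) (Fin 3) ℝ := Matrix.of fun p q => pd q (fun y => u t y p) x
  have hDρ : materialDeriv u ρ t x = 0 := htransport x t ht
  have hDF : ∀ p q, materialDeriv u (fun s y => F s y p q) t x = (L * Matrix.of (F t x)) p q :=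
    fun p q => by simpa [materialDeriv, Matrix.mul_apply, L] using hdeform x t ht p q
  have hGm : Matrix.of (G t x) = ρ t x • (Matrix.of (F t x) * (Matrix.of (F t x))ᵀ) - 1 := by
    ext p q
    simp [hG, Matrix.mul_apply, Matrix.one_apply]
  have hGij : (fun s y => G s y i j)
      = fun s y => ρ s y * ∑ k, F s y i k * F s y j k - if i = j then 1 else 0 := by
    funext s y
    exact hG s y i j
  change materialDeriv u (fun s y => G s y i j) t x - _ - _ = _
  rw [hGij, materialDeriv_sub_const,
    materialDeriv_mul_sum_mul (hdiff _ hρ_smooth) (fun p q => hdiff _ (hF_smooth p q)) hDF, hDρ,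
    zero_smul, zero_add, Matrix.smul_add_mul_transpose_eq_of_eq_smul_mul_transpose_sub_one hGm]
  simp [Matrix.mul_apply, L]
  ring

/-- Derivation of the evolution equation (2.3) for the effective tensor
`G := ρ̃𝔽𝔽ᵀ − I`: if `∂_tρ̃ + u·∇ρ̃ = 0` and `∂_t𝔽 + u·∇𝔽 = (∇u)𝔽` pointwise on
`ℝ³ × I` (for smooth `ρ̃, u, 𝔽`, with `I` an open interval), then
`∂_tG + u·∇G − (∇u)G − G(∇u)ᵀ = ∇u + (∇u)ᵀ` pointwise, stated componentwise. -/
theorem stmt5 (a b : ℝ)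
    (ρ : ℝ → E3 → ℝ) (u : ℝ → E3 → Fin 3 → ℝ) (F : ℝ → E3 → Fin 3 → Fin 3 → ℝ)
    (G : ℝ → E3 → Fin 3 → Fin 3 → ℝ)
    (hρ_smooth : ContDiffOn ℝ (⊤ : ℕ∞) (fun q : E3 × ℝ => ρ q.2 q.1)
      (Set.univ ×ˢ Set.Ioo a b))
    (hu_smooth : ∀ i, ContDiffOn ℝ (⊤ : ℕ∞) (fun q : E3 × ℝ => u q.2 q.1 i)
      (Set.univ ×ˢ Set.Ioo a b))
    (hF_smooth : ∀ i j, ContDiffOn ℝ (⊤ : ℕ∞) (fun q : E3 × ℝ => F q.2 q.1 i j)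
      (Set.univ ×ˢ Set.Ioo a b))
    (htransport : ∀ x : E3, ∀ t ∈ Set.Ioo a b,
      deriv (fun s => ρ s x) t + ∑ k, u t x k * pd k (ρ t) x = 0)
    (hdeform : ∀ x : E3, ∀ t ∈ Set.Ioo a b, ∀ i j,
      deriv (fun s => F s x i j) t + ∑ k, u t x k * pd k (fun y => F t y i j) x
        = ∑ k, pd k (fun y => u t y i) x * F t x k j)
    (hG : ∀ t x i j,
      G t x i j = ρ t x * (∑ k, F t x i k * F t x j k) - (if i = j then (1:ℝ) else 0)) :
    ∀ x : E3, ∀ t ∈ Set.Ioo a b, ∀ i j,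
      deriv (fun s => G s x i j) t + ∑ k, u t x k * pd k (fun y => G t y i j) x
        - ∑ k, pd k (fun y => u t y i) x * G t x k j
        - ∑ k, G t x i k * pd k (fun y => u t y j) x
      = pd j (fun y => u t y i) x + pd i (fun y => u t y j) x :=
  stmt5_general a b ρ u F G hρ_smooth hF_smooth htransport hdeform hG
end
end

section
/- Let 0 < r ≤ 4/√3 with r ≠ 2, and let G₁(r,t) = (e^{λ₂t} − e^{λ₁t})/(λ₂ − λ₁). Then for every t ≥ 0, |G₁(r,t)| ≤ t·e^{−r²t/4}. -/
noncomputable section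

/-- `Γ(r) = r⁴ − 4r²`. -/
def Gam (r : ℝ) : ℝ := r ^ 4 - 4 * r ^ 2

/-- `√(Γ(r))` as a complex number, taking `√Γ = i√(−Γ)` when `Γ < 0`. -/
def sqrtGam (r : ℝ) : ℂ :=
  if 0 ≤ Gam r then (Real.sqrt (Gam r) : ℂ) else Complex.I * (Real.sqrt (-Gam r) : ℂ)

/-- `λ₁(r) = (−r² + √Γ(r))/2`. -/
def lam1 (r : ℝ) : ℂ := (-(r : ℂ) ^ 2 + sqrtGam r) / 2

/-- `λ₂(r) = (−r² − √Γ(r))/2`. -/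
def lam2 (r : ℝ) : ℂ := (-(r : ℂ) ^ 2 - sqrtGam r) / 2

/-- The symbol matrix `A(r) = [[−r², r], [−r, 0]]`. -/
def Amat (r : ℝ) : Matrix (Fin 2) (Fin 2) ℂ :=
  !![-(r : ℂ) ^ 2, (r : ℂ); -(r : ℂ), 0]

/-- `G₁(r,t) = (e^{λ₂t} − e^{λ₁t})/(λ₂ − λ₁)`. -/
def G1 (r t : ℝ) : ℂ :=
  (Complex.exp (lam2 r * t) - Complex.exp (lam1 r * t)) / (lam2 r - lam1 r)

/-- Low-frequency bound on `G₁` (Proposition 3.2(I)): for `0 < r ≤ 4/√3`, `r ≠ 2`,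
and `t ≥ 0`, `|G₁(r,t)| ≤ t e^{−r²t/4}`. -/
theorem stmt9 (r : ℝ) (hr : 0 < r) (hr' : r ≤ 4 / Real.sqrt 3) (hr2 : r ≠ 2)
    (t : ℝ) (ht : 0 ≤ t) :
    ‖G1 r t‖ ≤ t * Real.exp (-(r ^ 2) * t / 4) := by
  rcases lt_or_gt_of_ne hr2 with h2 | h2
  · -- r < 2 : Γ < 0, oscillatory case
    have hrr : 0 < r ^ 2 := by positivity
    have hG : Gam r < 0 := by
      have h4 : r ^ 2 < 4 := by nlinarith
      unfold Gam; nlinarith [hrr, h4]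
    set b : ℝ := Real.sqrt (-Gam r) / 2 with hb
    have hbpos : 0 < b := by
      have := Real.sqrt_pos.2 (by linarith : 0 < -Gam r)
      positivity
    have hbne : ((b : ℝ) : ℂ) ≠ 0 := by exact_mod_cast hbpos.ne'
    have hsq : sqrtGam r = Complex.I * ((2 * b : ℝ) : ℂ) := by
      unfold sqrtGam
      rw [if_neg (not_le.2 hG)]
      push_cast [hb]
      ring
    have hlam1 : lam1 r = ((-(r^2)/2 : ℝ) : ℂ) + ((b : ℝ) : ℂ) * Complex.I := by
      unfold lam1; rw [hsq]; push_cast; ring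
    have hlam2 : lam2 r = ((-(r^2)/2 : ℝ) : ℂ) - ((b : ℝ) : ℂ) * Complex.I := by
      unfold lam2; rw [hsq]; push_cast; ring
    have hden : lam2 r - lam1 r = -2 * ((b : ℝ) : ℂ) * Complex.I := by
      rw [hlam1, hlam2]; ring
    have hnum : Complex.exp (lam2 r * t) - Complex.exp (lam1 r * t)
        = ((Real.exp (-(r^2)/2 * t) : ℝ) : ℂ) *
          (-2 * ((Real.sin (b * t) : ℝ) : ℂ) * Complex.I) := by
      rw [hlam1, hlam2]
      have e1 : (((-(r^2)/2 : ℝ) : ℂ) + ((b : ℝ) : ℂ) * Complex.I) * (t : ℂ)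
          = ((-(r^2)/2 * t : ℝ) : ℂ) + ((b * t : ℝ) : ℂ) * Complex.I := by push_cast; ring
      have e2 : (((-(r^2)/2 : ℝ) : ℂ) - ((b : ℝ) : ℂ) * Complex.I) * (t : ℂ)
          = ((-(r^2)/2 * t : ℝ) : ℂ) + ((-(b * t) : ℝ) : ℂ) * Complex.I := by push_cast; ring
      rw [e1, e2, Complex.exp_add, Complex.exp_add, Complex.exp_mul_I, Complex.exp_mul_I]
      simp only [← Complex.ofReal_cos, ← Complex.ofReal_sin, ← Complex.ofReal_exp,
        Real.cos_neg, Real.sin_neg]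
      push_cast
      ring
    rw [G1, hnum, hden]
    have : ((Real.exp (-(r^2)/2 * t) : ℝ) : ℂ) * (-2 * ((Real.sin (b * t) : ℝ) : ℂ) * Complex.I)
        / (-2 * ((b : ℝ) : ℂ) * Complex.I)
        = ((Real.exp (-(r^2)/2 * t) * (Real.sin (b * t) / b) : ℝ) : ℂ) := by
      push_cast
      field_simp
    rw [this, Complex.norm_real, Real.norm_eq_abs]
    have h1 : |Real.exp (-(r^2)/2 * t) * (Real.sin (b * t) / b)|
        = Real.exp (-(r^2)/2 * t) * (|Real.sin (b * t)| / b) := by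
      rw [abs_mul, abs_of_pos (Real.exp_pos _), abs_div, abs_of_pos hbpos]
    rw [h1]
    have h2' : |Real.sin (b * t)| / b ≤ t := by
      have h := Real.abs_sin_le_abs (x := b * t)
      rw [abs_of_nonneg (mul_nonneg hbpos.le ht)] at h
      rw [div_le_iff₀ hbpos]
      exact h.trans_eq (mul_comm b t)
    have h3 : Real.exp (-(r^2)/2 * t) ≤ Real.exp (-(r ^ 2) * t / 4) := by
      apply Real.exp_le_exp.2; nlinarith
    calc Real.exp (-(r^2)/2 * t) * (|Real.sin (b * t)| / b)
        ≤ Real.exp (-(r^2)/2 * t) * t :=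
          mul_le_mul_of_nonneg_left h2' (Real.exp_pos _).le
      _ ≤ t * Real.exp (-(r ^ 2) * t / 4) := by
          rw [mul_comm]; exact mul_le_mul_of_nonneg_left h3 ht
  · -- r > 2 : Γ > 0, real case
    have hG : 0 < Gam r := by
      have h4 : 4 < r ^ 2 := by nlinarith
      have hrr : 0 < r ^ 2 := by positivity
      unfold Gam; nlinarith
    set s : ℝ := Real.sqrt (Gam r) / 2 with hs
    have hspos : 0 < s := by
      have := Real.sqrt_pos.2 hG
      positivity
    have hsq : sqrtGam r = ((2 * s : ℝ) : ℂ) := by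
      unfold sqrtGam
      rw [if_pos hG.le]
      push_cast [hs]; ring
    set l1 : ℝ := -(r^2)/2 + s with hl1
    set l2 : ℝ := -(r^2)/2 - s with hl2
    have hlam1 : lam1 r = ((l1 : ℝ) : ℂ) := by
      unfold lam1; rw [hsq]; push_cast [hl1]; ring
    have hlam2 : lam2 r = ((l2 : ℝ) : ℂ) := by
      unfold lam2; rw [hsq]; push_cast [hl2]; ring
    have key : G1 r t = (((Real.exp (l1 * t) - Real.exp (l2 * t)) / (2 * s) : ℝ) : ℂ) := by
      rw [G1, hlam1, hlam2]
      have e1 : Complex.exp ((l2 : ℂ) * t) = ((Real.exp (l2 * t) : ℝ) : ℂ) := by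
        rw [← Complex.ofReal_mul, Complex.ofReal_exp]
      have e2 : Complex.exp ((l1 : ℂ) * t) = ((Real.exp (l1 * t) : ℝ) : ℂ) := by
        rw [← Complex.ofReal_mul, Complex.ofReal_exp]
      rw [e1, e2]
      have hd : ((l2 : ℝ) : ℂ) - ((l1 : ℝ) : ℂ) = ((-(2*s) : ℝ) : ℂ) := by
        push_cast [hl1, hl2]; ring
      rw [hd]
      norm_cast
      rw [div_eq_div_iff (by simp; linarith) (by positivity)]
      ring
    rw [key, Complex.norm_real, Real.norm_eq_abs]
    have hl2l1 : l2 ≤ l1 := by rw [hl1, hl2]; linarith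
    have hexp_le : Real.exp (l2 * t) ≤ Real.exp (l1 * t) :=
      Real.exp_le_exp.2 (mul_le_mul_of_nonneg_right hl2l1 ht)
    have habs : |(Real.exp (l1 * t) - Real.exp (l2 * t)) / (2 * s)|
        = (Real.exp (l1 * t) - Real.exp (l2 * t)) / (2 * s) := by
      rw [abs_of_nonneg]
      exact div_nonneg (by linarith) (by positivity)
    rw [habs]
    have hstep : Real.exp (l1 * t) - Real.exp (l2 * t) ≤ Real.exp (l1 * t) * (2 * s * t) := by
      have h1 : Real.exp (l2 * t) = Real.exp (l1 * t) * Real.exp (-(2*s*t)) := by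
        rw [← Real.exp_add]; congr 1; rw [hl1, hl2]; ring
      have h2 : 1 - (2*s*t) ≤ Real.exp (-(2*s*t)) := by
        have := Real.add_one_le_exp (-(2*s*t)); linarith
      calc Real.exp (l1 * t) - Real.exp (l2 * t)
          = Real.exp (l1 * t) * (1 - Real.exp (-(2*s*t))) := by rw [h1]; ring
        _ ≤ Real.exp (l1 * t) * (2*s*t) := by
            apply mul_le_mul_of_nonneg_left _ (Real.exp_pos _).le
            linarith
    have hr3 : (0:ℝ) < Real.sqrt 3 := Real.sqrt_pos.2 (by norm_num)
    have h3 : Real.sqrt 3 ^ 2 = 3 := Real.sq_sqrt (by norm_num)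
    have hrsq : r ^ 2 ≤ 16 / 3 := by
      have hm : r * Real.sqrt 3 ≤ 4 := by
        rw [← le_div_iff₀ hr3]; exact hr'
      nlinarith [mul_pos hr hr3]
    have hGle : Gam r ≤ (r ^ 2 / 2) ^ 2 := by
      unfold Gam; nlinarith [sq_nonneg r]
    have hsle : s ≤ r ^ 2 / 4 := by
      have hsq2 : Real.sqrt (Gam r) ≤ r ^ 2 / 2 := by
        calc Real.sqrt (Gam r) ≤ Real.sqrt ((r ^ 2 / 2) ^ 2) := Real.sqrt_le_sqrt hGle
          _ = r ^ 2 / 2 := Real.sqrt_sq (by positivity)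
      rw [hs]; linarith
    have hl1le : l1 ≤ -(r^2)/4 := by rw [hl1]; linarith
    have hfin : Real.exp (l1 * t) ≤ Real.exp (-(r ^ 2) * t / 4) := by
      apply Real.exp_le_exp.2
      nlinarith [mul_le_mul_of_nonneg_right hl1le ht]
    calc (Real.exp (l1 * t) - Real.exp (l2 * t)) / (2 * s)
        ≤ Real.exp (l1 * t) * (2 * s * t) / (2 * s) := by gcongr
      _ = t * Real.exp (l1 * t) := by field_simp
      _ ≤ t * Real.exp (-(r ^ 2) * t / 4) := mul_le_mul_of_nonneg_left hfin ht
end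
end

section
/- There exist constants C > 0 and c₀ > 0 such that for every r with 0 < r ≤ 4/√3, r ≠ 2, and every t ≥ 0, each of the four quantities |e^{λ₂t} + λ₁G₁(r,t)|, |r·G₁(r,t)|, |−r·G₁(r,t)|, and |e^{λ₁t} − λ₁G₁(r,t)| is bounded above by C·e^{−c₀ r² t}. -/
noncomputable section

/-! `λ₁, λ₂` are the roots of `λ² + r²λ + r²`, so `λ₁λ₂ = r²`, and since the chosen `√Γ` has
nonnegative real part, `|λ₁| ≤ |λ₂|`; hence `|λ₁| ≤ r`. For `r² ≤ 16/3` both roots have real part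
at most `−r²/4`. On that half-plane, `G₁` is at most `2e^{−r²t/4}/|λ₂ − λ₁|`, which is useful for
`r² ≤ 3` where `|λ₂ − λ₁| = r√(4 − r²) ≥ r`, and, by the mean value inequality for `z ↦ e^{zt}`,
at most `t e^{−r²t/4} ≤ (8/r²) e^{−r²t/8}`, which is useful for `r ≥ 1`. Either way
`|G₁| ≤ (8/r) e^{−r²t/8}`, and all four kernels are at most `9e^{−r²t/8}`. -/

theorem mul_exp_neg_mul_le_inv {a : ℝ} (ha : 0 < a) (t : ℝ) : t * Real.exp (-(a * t)) ≤ a⁻¹ := by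
  have key : a * t * Real.exp (-(a * t)) ≤ 1 :=
    (Real.mul_exp_neg_le_exp_neg_one _).trans (Real.exp_le_one_iff.mpr (by norm_num))
  calc t * Real.exp (-(a * t)) = a⁻¹ * (a * t * Real.exp (-(a * t))) := by field_simp
    _ ≤ a⁻¹ * 1 := by gcongr
    _ = a⁻¹ := mul_one _

section HalfPlane

variable {a b : ℂ} {c t : ℝ}

theorem norm_exp_mul_ofReal_le (ha : a.re ≤ -c) (ht : 0 ≤ t) :
    ‖Complex.exp (a * t)‖ ≤ Real.exp (-(c * t)) := by
  rw [Complex.norm_exp, Complex.re_mul_ofReal, Real.exp_le_exp]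
  nlinarith

theorem norm_exp_mul_ofReal_sub_le_two (ha : a.re ≤ -c) (hb : b.re ≤ -c) (ht : 0 ≤ t) :
    ‖Complex.exp (b * t) - Complex.exp (a * t)‖ ≤ 2 * Real.exp (-(c * t)) := by
  linarith [norm_sub_le (Complex.exp (b * t)) (Complex.exp (a * t)),
    norm_exp_mul_ofReal_le ha ht, norm_exp_mul_ofReal_le hb ht]

theorem norm_exp_mul_ofReal_sub_le_mul (ha : a.re ≤ -c) (hb : b.re ≤ -c) (ht : 0 ≤ t) :
    ‖Complex.exp (b * t) - Complex.exp (a * t)‖ ≤ t * Real.exp (-(c * t)) * ‖b - a‖ := by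
  refine (convex_halfSpace_re_le (-c)).norm_image_sub_le_of_norm_hasDerivWithin_le
    (f := fun z : ℂ => Complex.exp (z * t))
    (fun z _ => ((hasDerivAt_mul_const (t : ℂ)).cexp).hasDerivWithinAt) (fun z hz => ?_) ha hb
  rw [norm_mul, Complex.norm_real, Real.norm_of_nonneg ht, mul_comm]
  exact mul_le_mul_of_nonneg_left (norm_exp_mul_ofReal_le hz ht) ht

end HalfPlane

section Eigenvalues

variable {r : ℝ}

theorem sqrtGam_sq (r : ℝ) : sqrtGam r ^ 2 = Gam r := by
  unfold sqrtGam
  split_ifs with h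
  · rw [← Complex.ofReal_pow, Real.sq_sqrt h]
  · rw [mul_pow, Complex.I_sq, ← Complex.ofReal_pow, Real.sq_sqrt (by linarith)]
    push_cast; ring

theorem re_sqrtGam_nonneg (r : ℝ) : 0 ≤ (sqrtGam r).re := by
  unfold sqrtGam
  split_ifs <;> simp [Real.sqrt_nonneg]

theorem re_sqrtGam_le (hr : r ^ 2 ≤ 16 / 3) : (sqrtGam r).re ≤ r ^ 2 / 2 := by
  unfold sqrtGam
  split_ifs with h
  · rw [Complex.ofReal_re]
    refine Real.sqrt_le_iff.mpr ⟨by positivity, ?_⟩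
    unfold Gam; nlinarith [sq_nonneg r]
  · simp only [Complex.mul_re, Complex.I_re, Complex.ofReal_re, Complex.I_im, Complex.ofReal_im]
    nlinarith [sq_nonneg r]

theorem le_norm_sqrtGam (hr : 0 ≤ r) (hr3 : r ^ 2 ≤ 3) : r ≤ ‖sqrtGam r‖ := by
  have h : r ^ 2 ≤ ‖sqrtGam r‖ ^ 2 := by
    rw [← norm_pow, sqrtGam_sq, Complex.norm_real, Real.norm_eq_abs, Gam]
    refine le_abs.mpr (Or.inr ?_)
    nlinarith [sq_nonneg r]
  exact sq_le_sq₀ hr (norm_nonneg _) |>.mp h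

theorem lam2_sub_lam1 (r : ℝ) : lam2 r - lam1 r = -sqrtGam r := by
  unfold lam1 lam2; ring

theorem lam1_mul_lam2 (r : ℝ) : lam1 r * lam2 r = (r : ℂ) ^ 2 := by
  have h := sqrtGam_sq r
  unfold lam1 lam2
  unfold Gam at h
  push_cast at h
  linear_combination (-1 / 4 : ℂ) * h

theorem norm_lam1_le_norm_lam2 (r : ℝ) : ‖lam1 r‖ ≤ ‖lam2 r‖ := by
  have h := re_sqrtGam_nonneg r
  rw [← sq_le_sq₀ (norm_nonneg _) (norm_nonneg _), Complex.sq_norm, Complex.sq_norm,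
    Complex.normSq_apply, Complex.normSq_apply]
  simp only [lam1, lam2, Complex.div_ofNat_re, Complex.div_ofNat_im, Complex.add_re,
    Complex.add_im, Complex.sub_re, Complex.sub_im, Complex.neg_re, Complex.neg_im,
    ← Complex.ofReal_pow, Complex.ofReal_re, Complex.ofReal_im]
  nlinarith [sq_nonneg r]

theorem norm_lam1_le (hr : 0 ≤ r) : ‖lam1 r‖ ≤ r := by
  have h : ‖lam1 r‖ ^ 2 ≤ r ^ 2 := by
    calc ‖lam1 r‖ ^ 2 ≤ ‖lam1 r‖ * ‖lam2 r‖ := by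
          rw [sq]; exact mul_le_mul_of_nonneg_left (norm_lam1_le_norm_lam2 r) (norm_nonneg _)
      _ = r ^ 2 := by
          rw [← norm_mul, lam1_mul_lam2, ← Complex.ofReal_pow, Complex.norm_real,
            Real.norm_of_nonneg (by positivity)]
  exact sq_le_sq₀ (norm_nonneg _) hr |>.mp h

theorem re_lam1_le (hr : r ^ 2 ≤ 16 / 3) : (lam1 r).re ≤ -(r ^ 2 / 4) := by
  have := re_sqrtGam_le hr
  simp only [lam1, Complex.div_ofNat_re, Complex.add_re, Complex.neg_re, ← Complex.ofReal_pow,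
    Complex.ofReal_re]
  linarith

theorem re_lam2_le (r : ℝ) : (lam2 r).re ≤ -(r ^ 2 / 2) := by
  have := re_sqrtGam_nonneg r
  simp only [lam2, Complex.div_ofNat_re, Complex.sub_re, Complex.neg_re, ← Complex.ofReal_pow,
    Complex.ofReal_re]
  linarith

theorem norm_G1_le (hr : 0 < r) (hr' : r ^ 2 ≤ 16 / 3) {t : ℝ} (ht : 0 ≤ t) :
    ‖G1 r t‖ ≤ 8 / r * Real.exp (-(r ^ 2 / 8 * t)) := by
  have h1 : (lam1 r).re ≤ -(r ^ 2 / 4) := re_lam1_le hr'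
  have h2 : (lam2 r).re ≤ -(r ^ 2 / 4) := by linarith [re_lam2_le r, sq_nonneg r]
  have hsplit : Real.exp (-(r ^ 2 / 4 * t)) =
      Real.exp (-(r ^ 2 / 8 * t)) * Real.exp (-(r ^ 2 / 8 * t)) := by
    rw [← Real.exp_add]; ring_nf
  rw [G1, norm_div, lam2_sub_lam1, norm_neg]
  by_cases hr3 : r ^ 2 ≤ 3
  · calc _ ≤ 2 * Real.exp (-(r ^ 2 / 4 * t)) / r :=
          div_le_div₀ (by positivity) (norm_exp_mul_ofReal_sub_le_two h1 h2 ht) hr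
            (le_norm_sqrtGam hr.le hr3)
      _ ≤ 8 / r * Real.exp (-(r ^ 2 / 8 * t)) := by
          have hA : Real.exp (-(r ^ 2 / 8 * t)) ≤ 1 :=
            Real.exp_le_one_iff.mpr (by nlinarith [sq_nonneg r])
          rw [hsplit, div_le_iff₀ hr, mul_right_comm, div_mul_cancel₀ _ hr.ne']
          nlinarith [Real.exp_pos (-(r ^ 2 / 8 * t))]
  · have hr1 : 1 ≤ r := by nlinarith
    have hmvt := norm_exp_mul_ofReal_sub_le_mul h1 h2 ht
    rw [lam2_sub_lam1, norm_neg] at hmvt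
    refine div_le_of_le_mul₀ (norm_nonneg _) (by positivity) (hmvt.trans ?_)
    have hdecay : t * Real.exp (-(r ^ 2 / 8 * t)) ≤ 8 / r :=
      calc t * Real.exp (-(r ^ 2 / 8 * t)) ≤ (r ^ 2 / 8)⁻¹ :=
            mul_exp_neg_mul_le_inv (by positivity) t
        _ ≤ 8 / r := by
            rw [inv_div, div_le_div_iff_of_pos_left (by norm_num) (by positivity) hr]
            nlinarith
    rw [hsplit, ← mul_assoc]
    gcongr

theorem norm_lam1_mul_G1_le (hr : 0 < r) (hr' : r ^ 2 ≤ 16 / 3) {t : ℝ} (ht : 0 ≤ t) :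
    ‖lam1 r * G1 r t‖ ≤ 8 * Real.exp (-(r ^ 2 / 8 * t)) :=
  calc ‖lam1 r * G1 r t‖ ≤ r * (8 / r * Real.exp (-(r ^ 2 / 8 * t))) := by
        rw [norm_mul]; exact mul_le_mul (norm_lam1_le hr.le) (norm_G1_le hr hr' ht)
          (norm_nonneg _) hr.le
    _ = 8 * Real.exp (-(r ^ 2 / 8 * t)) := by field_simp

theorem norm_ofReal_mul_G1_le (hr : 0 < r) (hr' : r ^ 2 ≤ 16 / 3) {t : ℝ} (ht : 0 ≤ t) :
    ‖(r : ℂ) * G1 r t‖ ≤ 8 * Real.exp (-(r ^ 2 / 8 * t)) :=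
  calc ‖(r : ℂ) * G1 r t‖ ≤ r * (8 / r * Real.exp (-(r ^ 2 / 8 * t))) := by
        rw [norm_mul, Complex.norm_real, Real.norm_of_nonneg hr.le]
        exact mul_le_mul_of_nonneg_left (norm_G1_le hr hr' ht) hr.le
    _ = 8 * Real.exp (-(r ^ 2 / 8 * t)) := by field_simp

end Eigenvalues

/-- Low-frequency kernel bounds (Proposition 3.2(I)): there exist `C > 0`, `c₀ > 0`
such that for all `0 < r ≤ 4/√3` with `r ≠ 2` and all `t ≥ 0`, the four kernels
`K̂₁ = e^{λ₂t} + λ₁G₁`, `K̂₂ = rG₁`, `K̂₃ = −rG₁`, `K̂₄ = e^{λ₁t} − λ₁G₁`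
are bounded by `C e^{−c₀r²t}`. -/
theorem stmt10 :
    ∃ C : ℝ, 0 < C ∧ ∃ c₀ : ℝ, 0 < c₀ ∧
      ∀ r : ℝ, 0 < r → r ≤ 4 / Real.sqrt 3 → r ≠ 2 → ∀ t : ℝ, 0 ≤ t →
        ‖Complex.exp (lam2 r * t) + lam1 r * G1 r t‖ ≤ C * Real.exp (-(c₀ * r ^ 2 * t)) ∧
        ‖(r : ℂ) * G1 r t‖ ≤ C * Real.exp (-(c₀ * r ^ 2 * t)) ∧
        ‖-(r : ℂ) * G1 r t‖ ≤ C * Real.exp (-(c₀ * r ^ 2 * t)) ∧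
        ‖Complex.exp (lam1 r * t) - lam1 r * G1 r t‖ ≤ C * Real.exp (-(c₀ * r ^ 2 * t)) := by
  refine ⟨9, by norm_num, 1 / 8, by norm_num, fun r hr hr4 _ t ht => ?_⟩
  have hr' : r ^ 2 ≤ 16 / 3 :=
    calc r ^ 2 ≤ (4 / Real.sqrt 3) ^ 2 := pow_le_pow_left₀ hr.le hr4 2
      _ = 16 / 3 := by rw [div_pow, Real.sq_sqrt (by norm_num)]; norm_num
  have hc : 1 / 8 * r ^ 2 * t = r ^ 2 / 8 * t := by ring
  have he1 : ‖Complex.exp (lam1 r * t)‖ ≤ Real.exp (-(r ^ 2 / 8 * t)) :=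
    norm_exp_mul_ofReal_le (by linarith [re_lam1_le hr', sq_nonneg r]) ht
  have he2 : ‖Complex.exp (lam2 r * t)‖ ≤ Real.exp (-(r ^ 2 / 8 * t)) :=
    norm_exp_mul_ofReal_le (by linarith [re_lam2_le r, sq_nonneg r]) ht
  have hE := Real.exp_pos (-(r ^ 2 / 8 * t))
  have hlG := norm_lam1_mul_G1_le hr hr' ht
  have hrG := norm_ofReal_mul_G1_le hr hr' ht
  rw [hc, neg_mul, norm_neg]
  refine ⟨?_, by linarith, by linarith, ?_⟩
  · linarith [norm_add_le (Complex.exp (lam2 r * t)) (lam1 r * G1 r t)]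
  · linarith [norm_sub_le (Complex.exp (lam1 r * t)) (lam1 r * G1 r t)]
end
end

section
/- There exist constants C > 0 and c₁ > 0 such that for every r ≥ 4/√3 and every t ≥ 0: |r·G₁(r,t)| ≤ C r^{−1} e^{−c₁ t} and |−r·G₁(r,t)| ≤ C r^{−1} e^{−c₁ t}, while |e^{λ₂t} + λ₁G₁(r,t)| ≤ C e^{−c₁ t} and |e^{λ₁t} − λ₁G₁(r,t)| ≤ C e^{−c₁ t}. -/
noncomputable section

set_option maxHeartbeats 1000000 in
/-- High-frequency kernel bounds (Proposition 3.2(II)): there exist `C > 0`, `c₁ > 0`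
such that for all `r ≥ 4/√3` and `t ≥ 0`:
`|rG₁|, |−rG₁| ≤ C r⁻¹ e^{−c₁t}` and `|e^{λ₂t} + λ₁G₁|, |e^{λ₁t} − λ₁G₁| ≤ C e^{−c₁t}`. -/
theorem stmt12 :
    ∃ C : ℝ, 0 < C ∧ ∃ c₁ : ℝ, 0 < c₁ ∧
      ∀ r : ℝ, 4 / Real.sqrt 3 ≤ r → ∀ t : ℝ, 0 ≤ t →
        ‖(r : ℂ) * G1 r t‖ ≤ C * r⁻¹ * Real.exp (-(c₁ * t)) ∧
        ‖-(r : ℂ) * G1 r t‖ ≤ C * r⁻¹ * Real.exp (-(c₁ * t)) ∧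
        ‖Complex.exp (lam2 r * t) + lam1 r * G1 r t‖ ≤ C * Real.exp (-(c₁ * t)) ∧
        ‖Complex.exp (lam1 r * t) - lam1 r * G1 r t‖ ≤ C * Real.exp (-(c₁ * t)) := by
  refine ⟨4, by norm_num, 1, by norm_num, ?_⟩
  intro r hr t ht
  have h3 : (0:ℝ) < Real.sqrt 3 := Real.sqrt_pos.mpr (by norm_num)
  have hr0 : 0 < r := lt_of_lt_of_le (by positivity) hr
  have hr2 : (16:ℝ)/3 ≤ r ^ 2 := by
    have h1 : (4 / Real.sqrt 3) ^ 2 ≤ r ^ 2 := by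
      apply pow_le_pow_left₀ (by positivity) hr
    have h2 : (4 / Real.sqrt 3) ^ 2 = 16 / 3 := by
      rw [div_pow, Real.sq_sqrt (by norm_num : (0:ℝ) ≤ 3)]; norm_num
    linarith [h2 ▸ h1]
  have hG : 0 ≤ Gam r := by unfold Gam; nlinarith
  have hGam_eq : Gam r = r ^ 4 - 4 * r ^ 2 := rfl
  set s := Real.sqrt (Gam r) with hs_def
  have hs0 : 0 ≤ s := Real.sqrt_nonneg _
  have hs2 : s ^ 2 = Gam r := Real.sq_sqrt hG
  have hsle : s ≤ r ^ 2 - 2 := by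
    have h1 : s ≤ Real.sqrt ((r ^ 2 - 2) ^ 2) :=
      Real.sqrt_le_sqrt (by nlinarith)
    rwa [Real.sqrt_sq (by nlinarith)] at h1
  have hsge : r ^ 2 / 2 ≤ s := by
    have h1 := Real.sqrt_le_sqrt (show (r ^ 2 / 2) ^ 2 ≤ Gam r by nlinarith)
    rwa [Real.sqrt_sq (by positivity)] at h1
  have hsge2 : r ^ 2 - 4 ≤ s := by
    have h1 := Real.sqrt_le_sqrt (show (r ^ 2 - 4) ^ 2 ≤ Gam r by nlinarith)
    rwa [Real.sqrt_sq (by nlinarith)] at h1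
  set l1 : ℝ := (-r ^ 2 + s) / 2 with hl1_def
  set l2 : ℝ := (-r ^ 2 - s) / 2 with hl2_def
  have hlam1 : lam1 r = (l1 : ℂ) := by
    unfold lam1 sqrtGam
    rw [if_pos hG, hl1_def, hs_def]
    push_cast
    ring
  have hlam2 : lam2 r = (l2 : ℂ) := by
    unfold lam2 sqrtGam
    rw [if_pos hG, hl2_def, hs_def]
    push_cast
    ring
  set e1 := Real.exp (l1 * t) with he1_def
  set e2 := Real.exp (l2 * t) with he2_def
  have hexp1 : Complex.exp (lam1 r * t) = (e1 : ℂ) := by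
    rw [hlam1, he1_def, Complex.ofReal_exp]; push_cast; ring_nf
  have hexp2 : Complex.exp (lam2 r * t) = (e2 : ℂ) := by
    rw [hlam2, he2_def, Complex.ofReal_exp]; push_cast; ring_nf
  have hdiff : l2 - l1 = -s := by rw [hl1_def, hl2_def]; ring
  have hspos : 0 < s := lt_of_lt_of_le (by positivity) hsge
  have hdne : l2 - l1 ≠ 0 := by rw [hdiff]; exact neg_ne_zero.mpr (ne_of_gt hspos)
  have hdneC : (l2 : ℂ) - (l1 : ℂ) ≠ 0 := by
    rw [← Complex.ofReal_sub]
    exact Complex.ofReal_ne_zero.mpr hdne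
  have hG1 : G1 r t = (((e2 - e1) / (l2 - l1) : ℝ) : ℂ) := by
    unfold G1
    rw [hexp1, hexp2, hlam1, hlam2]
    push_cast
    ring
  have hl1le : l1 ≤ -1 := by rw [hl1_def]; linarith
  have hl2le : l2 ≤ l1 := by rw [hl1_def, hl2_def]; linarith
  set E := Real.exp (-(1 * t)) with hE_def
  have hE : 0 < E := Real.exp_pos _
  have he1E : e1 ≤ E := by
    rw [he1_def, hE_def]
    apply Real.exp_le_exp.mpr
    nlinarith
  have he2E : e2 ≤ E := by
    rw [he2_def, hE_def]
    apply Real.exp_le_exp.mpr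
    nlinarith
  have he1pos : 0 < e1 := Real.exp_pos _
  have he2pos : 0 < e2 := Real.exp_pos _
  have he21 : e2 ≤ e1 := Real.exp_le_exp.mpr (by nlinarith)
  have habsdiff : |l2 - l1| = s := by rw [hdiff, abs_neg, abs_of_nonneg hs0]
  have hnum1 : |e2 - e1| ≤ e1 := by
    rw [abs_sub_comm, abs_of_nonneg (by linarith)]
    linarith
  have hfirst : ‖(r : ℂ) * G1 r t‖ ≤ 4 * r⁻¹ * E := by
    rw [hG1, show (r : ℂ) * (((e2 - e1) / (l2 - l1) : ℝ) : ℂ)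
        = ((r * ((e2 - e1) / (l2 - l1)) : ℝ) : ℂ) from by push_cast; ring,
      Complex.norm_real, Real.norm_eq_abs, abs_mul, abs_of_pos hr0, abs_div, habsdiff,
      ← mul_div_assoc, div_le_iff₀ hspos]
    have h1 : r * |e2 - e1| ≤ r * E :=
      mul_le_mul_of_nonneg_left (le_trans hnum1 he1E) hr0.le
    have h2 : 4 * r⁻¹ * E * (r ^ 2 / 2) ≤ 4 * r⁻¹ * E * s :=
      mul_le_mul_of_nonneg_left hsge (by positivity)
    have h3 : 4 * r⁻¹ * E * (r ^ 2 / 2) = 2 * r * E := by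
      field_simp
      ring
    nlinarith [mul_pos hr0 hE]
  have habsl1 : |l1| ≤ 2 := by
    rw [abs_of_nonpos (by rw [hl1_def]; linarith), hl1_def]; linarith
  have habsl2 : |l2| ≤ r ^ 2 := by
    rw [abs_of_nonpos (by rw [hl2_def]; linarith), hl2_def]; linarith
  have hid3 : Complex.exp (lam2 r * t) + lam1 r * G1 r t
      = (((l2 * e2 - l1 * e1) / (l2 - l1) : ℝ) : ℂ) := by
    rw [hexp2, hlam1, hG1]
    push_cast
    field_simp
    ring
  have hid4 : Complex.exp (lam1 r * t) - lam1 r * G1 r t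
      = (((l2 * e1 - l1 * e2) / (l2 - l1) : ℝ) : ℂ) := by
    rw [hexp1, hlam1, hG1]
    push_cast
    field_simp
    ring
  have hbound : ∀ a b : ℝ, a ≤ E → b ≤ E → 0 < a → 0 < b →
      |(l2 * a - l1 * b) / (l2 - l1)| ≤ 4 * E := by
    intro a b haE hbE ha hb
    rw [abs_div, habsdiff, div_le_iff₀ hspos]
    have h1 : |l2 * a - l1 * b| ≤ |l2| * a + |l1| * b := by
      calc |l2 * a - l1 * b| ≤ |l2 * a| + |l1 * b| := abs_sub _ _
        _ = |l2| * a + |l1| * b := by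
            rw [abs_mul, abs_mul, abs_of_pos ha, abs_of_pos hb]
    have h2 : |l2| * a + |l1| * b ≤ r ^ 2 * E + 2 * E := by
      have := abs_nonneg l2
      have := abs_nonneg l1
      nlinarith
    have h3 : r ^ 2 * E + 2 * E ≤ 4 * E * s := by nlinarith
    linarith
  refine ⟨hfirst, ?_, ?_, ?_⟩
  · rw [show -(r:ℂ) * G1 r t = -((r:ℂ) * G1 r t) from by ring, norm_neg]
    exact hfirst
  · rw [hid3, Complex.norm_real, Real.norm_eq_abs]
    exact hbound e2 e1 he2E he1E he2pos he1pos
  · rw [hid4, Complex.norm_real, Real.norm_eq_abs]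
    exact hbound e1 e2 he1E he2E he1pos he2pos
end
end
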